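/- Let P and Q be lattice polytopes in ℝ^n with L(P) = L(Q) = 1 and L(P+Q) = 2. If P contains at least two lattice segments (segments between lattice points of P) whose reduced direction vectors represent the same class in ℤ₃ℙ^{n−1}, then Q contains no lattice segment from that class. -/

import Mathlib

open Pointwise

/-- The real point corresponding to a lattice point. -/
def coeV {n : ℕ} (v : Fin n → ℤ) : Fin n → ℝ := fun i => (v i : ℝ)

/-- A vector in `ℤ^n` is primitive if the gcd of its coordinates is `1`. -/
def IsPrim {n : ℕ} (v : Fin n → ℤ) : Prop := Finset.univ.gcd v = 1

/-- The zonotope with base lattice point `A` obtained as the Minkowski sum of the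
lattice segments `[0, v i]`. -/
def Zono {n L : ℕ} (A : Fin n → ℤ) (v : Fin L → Fin n → ℤ) : Set (Fin n → ℝ) :=
  ({coeV A} : Set (Fin n → ℝ)) + ∑ i, segment ℝ 0 (coeV (v i))

/-- `P` contains (a translate of) a Minkowski sum of `L` primitive lattice segments. -/
def IsDecomp {n : ℕ} (P : Set (Fin n → ℝ)) (L : ℕ) : Prop :=
  ∃ (A : Fin n → ℤ) (v : Fin L → Fin n → ℤ), (∀ i, IsPrim (v i)) ∧ Zono A v ⊆ P

/-- `L` is the Minkowski length of `P`. -/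
def MinkLen {n : ℕ} (P : Set (Fin n → ℝ)) (L : ℕ) : Prop :=
  IsDecomp P L ∧ ∀ M, IsDecomp P M → M ≤ L

/-- `P` is a lattice polytope: the convex hull of a nonempty finite set of lattice points. -/
def IsLatticePolytope {n : ℕ} (P : Set (Fin n → ℝ)) : Prop :=
  ∃ S : Finset (Fin n → ℤ), S.Nonempty ∧ P = convexHull ℝ (coeV '' ↑S)

/-- `Zono A v` is a smallest maximal Minkowski decomposition in `P`: it realizes the
Minkowski length of `P` and is minimal with respect to inclusion among all maximal
decompositions in `P`. -/
def IsSmallestMax {n L : ℕ} (P : Set (Fin n → ℝ)) (A : Fin n → ℤ)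
    (v : Fin L → Fin n → ℤ) : Prop :=
  (∀ i, IsPrim (v i)) ∧ Zono A v ⊆ P ∧ MinkLen P L ∧
    ∀ (B : Fin n → ℤ) (w : Fin L → Fin n → ℤ), (∀ i, IsPrim (w i)) →
      Zono B w ⊆ P → Zono B w ⊆ Zono A v → Zono B w = Zono A v

/-- Two direction vectors represent the same class in `ℤ₃ℙ^{n-1}`:
they are congruent mod 3 up to sign. -/
def SameClass3 {n : ℕ} (d e : Fin n → ℤ) : Prop :=
  (∀ i, (d i - e i) % 3 = 0) ∨ (∀ i, (d i + e i) % 3 = 0)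

/-!
If `[x, y] ⊆ P` and `[a, b] ⊆ Q` are in the same class, then `x + b, y + a` (or `x + a, y + b`)
are lattice points of the convex set `P + Q` congruent mod 3. Were they distinct, the segment
joining them would hold three primitive segments, against `L(P + Q) = 2`; hence `y - x = ±(b - a)`.
Both segments of `P` are then translates of `[a, b]`, hence of each other, and two distinct
translates of a lattice segment span a lattice parallelogram in `P`, against `L(P) = 1`.
-/

section

variable {n : ℕ}

lemma coeV_add (x y : Fin n → ℤ) : coeV (x + y) = coeV x + coeV y := by
  funext i; simp [coeV]

lemma coeV_zsmul (m : ℤ) (x : Fin n → ℤ) : coeV (m • x) = (m : ℝ) • coeV x := by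
  funext i; simp [coeV]

lemma exists_isPrim_smul_eq {v : Fin n → ℤ} (hv : v ≠ 0) :
    ∃ m : ℤ, 0 < m ∧ ∃ p, IsPrim p ∧ v = m • p := by
  obtain ⟨i, hi⟩ := Function.ne_iff.mp hv
  obtain ⟨p, hvp, hp⟩ := Finset.univ.extract_gcd v ⟨i, Finset.mem_univ i⟩
  have hnonneg : 0 ≤ Finset.univ.gcd v := Int.nonneg_of_normalize_eq_self Finset.normalize_gcd
  have hne : Finset.univ.gcd v ≠ 0 := fun h =>
    hi (Finset.gcd_eq_zero_iff.mp h i (Finset.mem_univ i))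
  exact ⟨_, lt_of_le_of_ne hnonneg hne.symm, p, hp, funext fun j => hvp j (Finset.mem_univ j)⟩

lemma mem_zono_iff {L : ℕ} (A : Fin n → ℤ) (v : Fin L → Fin n → ℤ) (x : Fin n → ℝ) :
    x ∈ Zono A v ↔ ∃ t ∈ Set.Icc (0 : Fin L → ℝ) 1, x = coeV A + ∑ i, t i • coeV (v i) := by
  rw [Zono, ← parallelepiped_eq_sum_segment, Set.singleton_add]
  simp only [Set.mem_image, mem_parallelepiped_iff]
  constructor
  · rintro ⟨_, ⟨t, ht, rfl⟩, rfl⟩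
    exact ⟨t, ht, rfl⟩
  · rintro ⟨t, ht, rfl⟩
    exact ⟨_, ⟨t, ht, rfl⟩, rfl⟩

lemma isDecomp_of_zono_subset {L : ℕ} {R : Set (Fin n → ℝ)} {A : Fin n → ℤ}
    {v : Fin L → Fin n → ℤ} (hv : ∀ i, v i ≠ 0) (h : Zono A v ⊆ R) : IsDecomp R L := by
  choose m hm p hp hvp using fun i => exists_isPrim_smul_eq (hv i)
  refine ⟨A, p, hp, fun x hx => h ?_⟩
  obtain ⟨t, ht, rfl⟩ := (mem_zono_iff A p x).mp hx
  have hm1 : ∀ i, (1 : ℝ) ≤ m i := fun i => by exact_mod_cast hm i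
  refine (mem_zono_iff A v _).mpr ⟨fun i => t i / m i, ⟨fun i => ?_, fun i => ?_⟩, ?_⟩
  · exact div_nonneg (ht.1 i) (by linarith [hm1 i])
  · exact div_le_one_of_le₀ ((ht.2 i).trans (hm1 i)) (by linarith [hm1 i])
  · congr 1
    refine Finset.sum_congr rfl fun i _ => ?_
    rw [hvp i, coeV_zsmul, smul_smul, div_mul_cancel₀ _ (by linarith [hm1 i])]

lemma zono_const_subset {R : Set (Fin n → ℝ)} (hR : Convex ℝ R) {k : ℕ} {z d : Fin n → ℤ}
    (hz : coeV z ∈ R) (hz' : coeV (z + (k : ℤ) • d) ∈ R) : Zono z (fun _ : Fin k => d) ⊆ R := by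
  intro x hx
  obtain ⟨t, ht, rfl⟩ := (mem_zono_iff z _ x).mp hx
  rcases k.eq_zero_or_pos with rfl | hk
  · simpa using hz
  have hk' : (0 : ℝ) < k := by exact_mod_cast hk
  have hsum : ∑ i, t i • coeV d = ((∑ i, t i) / k) • ((k : ℤ) : ℝ) • coeV d := by
    rw [← Finset.sum_smul, smul_smul, Int.cast_natCast, div_mul_cancel₀ _ hk'.ne']
  rw [hsum]
  refine hR.add_smul_mem hz (by rwa [← coeV_zsmul, ← coeV_add]) ⟨?_, ?_⟩
  · exact div_nonneg (Finset.sum_nonneg fun i _ => ht.1 i) hk'.le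
  · rw [div_le_one hk']
    calc ∑ i, t i ≤ ∑ _i : Fin k, (1 : ℝ) := Finset.sum_le_sum fun i _ => ht.2 i
      _ = k := by simp

lemma isDecomp_of_add_smul_mem {R : Set (Fin n → ℝ)} (hR : Convex ℝ R) {k : ℕ}
    {z d : Fin n → ℤ} (hd : d ≠ 0) (hz : coeV z ∈ R) (hz' : coeV (z + (k : ℤ) • d) ∈ R) :
    IsDecomp R k :=
  isDecomp_of_zono_subset (fun _ => hd) (zono_const_subset hR hz hz')

lemma zono_pair_subset {R : Set (Fin n → ℝ)} (hR : Convex ℝ R) {z u d : Fin n → ℤ}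
    (h₀₀ : coeV z ∈ R) (h₁₀ : coeV (z + u) ∈ R) (h₀₁ : coeV (z + d) ∈ R)
    (h₁₁ : coeV (z + u + d) ∈ R) : Zono z ![u, d] ⊆ R := by
  intro x hx
  obtain ⟨t, ht, rfl⟩ := (mem_zono_iff z _ x).mp hx
  have hs : t 0 ∈ Set.Icc (0 : ℝ) 1 := ⟨ht.1 0, ht.2 0⟩
  simp only [coeV_add] at h₁₀ h₀₁ h₁₁
  have hW₀ : coeV z + t 0 • coeV u ∈ R := hR.add_smul_mem h₀₀ h₁₀ hs
  have hW₁ : coeV z + coeV d + t 0 • coeV u ∈ R :=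
    hR.add_smul_mem h₀₁ (by rwa [add_right_comm]) hs
  convert hR.add_smul_mem hW₀ (y := coeV d) (by rwa [add_right_comm]) ⟨ht.1 1, ht.2 1⟩ using 1
  simp [Fin.sum_univ_two, add_assoc]

lemma isDecomp_two_of_parallelogram {R : Set (Fin n → ℝ)} (hR : Convex ℝ R)
    {z u d : Fin n → ℤ} (hu : u ≠ 0) (hd : d ≠ 0) (h₀₀ : coeV z ∈ R) (h₁₀ : coeV (z + u) ∈ R)
    (h₀₁ : coeV (z + d) ∈ R) (h₁₁ : coeV (z + u + d) ∈ R) : IsDecomp R 2 :=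
  isDecomp_of_zono_subset (v := ![u, d]) (fun i => by fin_cases i <;> assumption)
    (zono_pair_subset hR h₀₀ h₁₀ h₀₁ h₁₁)

lemma IsLatticePolytope.convex {P : Set (Fin n → ℝ)} (hP : IsLatticePolytope P) :
    Convex ℝ P := by
  obtain ⟨S, -, rfl⟩ := hP
  exact convex_convexHull ℝ _

lemma MinkLen.not_isDecomp {P : Set (Fin n → ℝ)} {L M : ℕ} (hP : MinkLen P L) (hLM : L < M) :
    ¬ IsDecomp P M :=
  fun h => (hP.2 M h).not_gt hLM

lemma SameClass3.symm {d e : Fin n → ℤ} (h : SameClass3 d e) : SameClass3 e d := by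
  rcases h with h | h
  · exact Or.inl fun i => by have := h i; omega
  · exact Or.inr fun i => by have := h i; omega

lemma SameClass3.trans {d e f : Fin n → ℤ} (h : SameClass3 d e) (h' : SameClass3 e f) :
    SameClass3 d f := by
  rcases h with h | h <;> rcases h' with h' | h'
  · exact Or.inl fun i => by have := h i; have := h' i; omega
  · exact Or.inr fun i => by have := h i; have := h' i; omega
  · exact Or.inr fun i => by have := h i; have := h' i; omega
  · exact Or.inl fun i => by have := h i; have := h' i; omega

lemma eq_of_sub_emod_three_eq_zero {R : Set (Fin n → ℝ)} (hR : Convex ℝ R)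
    (h3 : ¬ IsDecomp R 3) {z z' : Fin n → ℤ} (hz : coeV z ∈ R) (hz' : coeV z' ∈ R)
    (hzz' : ∀ i, (z' i - z i) % 3 = 0) : z = z' := by
  choose w hw using fun i => Int.dvd_of_emod_eq_zero (hzz' i)
  have hz'w : z' = z + ((3 : ℕ) : ℤ) • w := funext fun i => by simp [← hw i]
  by_contra hne
  have hw0 : w ≠ 0 := fun h => hne (by simp [hz'w, h])
  exact h3 (isDecomp_of_add_smul_mem hR hw0 hz (hz'w ▸ hz'))

lemma sub_eq_or_eq_neg_of_sameClass3 {P Q : Set (Fin n → ℝ)} (hP : Convex ℝ P)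
    (hQ : Convex ℝ Q) (h3 : ¬ IsDecomp (P + Q) 3) {x y a b : Fin n → ℤ} (hx : coeV x ∈ P)
    (hy : coeV y ∈ P) (ha : coeV a ∈ Q) (hb : coeV b ∈ Q) (h : SameClass3 (y - x) (b - a)) :
    y - x = b - a ∨ y - x = -(b - a) := by
  have hmem : ∀ {p q}, coeV p ∈ P → coeV q ∈ Q → coeV (p + q) ∈ P + Q := fun hp hq =>
    coeV_add _ _ ▸ Set.add_mem_add hp hq
  rcases h with h | h
  · have := eq_of_sub_emod_three_eq_zero (hP.add hQ) h3 (hmem hx hb) (hmem hy ha)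
      fun i => by have := h i; simp only [Pi.add_apply, Pi.sub_apply] at this ⊢; omega
    exact Or.inl (by linear_combination -this)
  · have := eq_of_sub_emod_three_eq_zero (hP.add hQ) h3 (hmem hx ha) (hmem hy hb)
      fun i => by have := h i; simp only [Pi.add_apply, Pi.sub_apply] at this ⊢; omega
    exact Or.inr (by linear_combination -this)

lemma eq_of_add_mem_of_add_mem {R : Set (Fin n → ℝ)} (hR : Convex ℝ R) (h2 : ¬ IsDecomp R 2)
    {x x' u : Fin n → ℤ} (hu : u ≠ 0) (hx : coeV x ∈ R) (hxu : coeV (x + u) ∈ R)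
    (hx' : coeV x' ∈ R) (hx'u : coeV (x' + u) ∈ R) : x = x' := by
  by_contra hne
  refine h2 (isDecomp_two_of_parallelogram hR hu (sub_ne_zero.mpr (Ne.symm hne)) hx hxu ?_ ?_)
  · rwa [add_sub_cancel]
  · rwa [add_right_comm, add_sub_cancel]

end

theorem stmt11_general {n : ℕ} (P Q : Set (Fin n → ℝ))
    (hP : IsLatticePolytope P) (hQ : IsLatticePolytope Q)
    (hLP : MinkLen P 1) (hPQ : MinkLen (P + Q) 2)
    (x₁ y₁ x₂ y₂ : Fin n → ℤ)
    (hx₁ : coeV x₁ ∈ P) (hy₁ : coeV y₁ ∈ P) (hx₂ : coeV x₂ ∈ P) (hy₂ : coeV y₂ ∈ P)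
    (hne₁ : x₁ ≠ y₁)
    (hdistinct : ({x₁, y₁} : Set (Fin n → ℤ)) ≠ {x₂, y₂})
    (hsame : SameClass3 (fun i => y₁ i - x₁ i) (fun i => y₂ i - x₂ i)) :
    ∀ a b : Fin n → ℤ, coeV a ∈ Q → coeV b ∈ Q → a ≠ b →
      ¬ SameClass3 (fun i => y₁ i - x₁ i) (fun i => b i - a i) := by
  intro a b ha hb _ hclass
  have h3 := hPQ.not_isDecomp (by norm_num : 2 < 3)
  have hdir₁ := sub_eq_or_eq_neg_of_sameClass3 hP.convex hQ.convex h3 hx₁ hy₁ ha hb hclass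
  have hdir₂ := sub_eq_or_eq_neg_of_sameClass3 hP.convex hQ.convex h3 hx₂ hy₂ ha hb
    (hsame.symm.trans hclass)
  have hpar : y₂ - x₂ = y₁ - x₁ ∨ y₂ - x₂ = -(y₁ - x₁) := by
    rcases hdir₁ with h₁ | h₁ <;> rcases hdir₂ with h₂ | h₂ <;> simp [h₁, h₂]
  have htrans : ∀ x', coeV x' ∈ P → coeV (x' + (y₁ - x₁)) ∈ P → x₁ = x' := fun _ =>
    eq_of_add_mem_of_add_mem hP.convex (hLP.not_isDecomp (by norm_num : 1 < 2))
      (sub_ne_zero.mpr hne₁.symm) hx₁ (by rwa [add_sub_cancel])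
  apply hdistinct
  rcases hpar with h | h
  · have hx : x₁ = x₂ := htrans x₂ hx₂ (by rwa [← h, add_sub_cancel])
    have hy : y₁ = y₂ := by linear_combination hx - h
    rw [hx, hy]
  · have hx : x₁ = y₂ :=
      htrans y₂ hy₂ (by rwa [show y₂ + (y₁ - x₁) = x₂ by linear_combination h])
    have hy : y₁ = x₂ := by linear_combination h + hx
    rw [hx, hy, Set.pair_comm]

/-- If `L(P) = L(Q) = 1`, `L(P+Q) = 2`, and `P` contains two distinct lattice segments from
the same class of `ℤ₃ℙ^{n-1}`, then `Q` contains no lattice segment from that class. -/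
theorem stmt11 {n : ℕ} (P Q : Set (Fin n → ℝ))
    (hP : IsLatticePolytope P) (hQ : IsLatticePolytope Q)
    (hLP : MinkLen P 1) (hLQ : MinkLen Q 1) (hPQ : MinkLen (P + Q) 2)
    (x₁ y₁ x₂ y₂ : Fin n → ℤ)
    (hx₁ : coeV x₁ ∈ P) (hy₁ : coeV y₁ ∈ P) (hx₂ : coeV x₂ ∈ P) (hy₂ : coeV y₂ ∈ P)
    (hne₁ : x₁ ≠ y₁) (hne₂ : x₂ ≠ y₂)
    (hdistinct : ({x₁, y₁} : Set (Fin n → ℤ)) ≠ {x₂, y₂})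
    (hnz3 : ¬ ∀ i, (3 : ℤ) ∣ (y₁ i - x₁ i))
    (hsame : SameClass3 (fun i => y₁ i - x₁ i) (fun i => y₂ i - x₂ i)) :
    ∀ a b : Fin n → ℤ, coeV a ∈ Q → coeV b ∈ Q → a ≠ b →
      ¬ SameClass3 (fun i => y₁ i - x₁ i) (fun i => b i - a i) :=
  stmt11_general P Q hP hQ hLP hPQ x₁ y₁ x₂ y₂ hx₁ hy₁ hx₂ hy₂ hne₁ hdistinct hsame
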